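/- arXiv:1503.02209 — 8 statements merged into one kernel-verified Lean document; each statement's English description precedes it below -/
import Mathlib

section
/- Let α : ℝ² → ℝ be a smooth solution of the Fokker–Planck equation. Then the function f₁(x,t) = e^{-2a₂t}·[α_t(x,t) − (a₂x+a₁)·α_x(x,t) + 2(a₂x+a₁)²·α(x,t)] is also a solution of the Fokker–Planck equation. -/
noncomputable section
namespace FPEaux

def pd (v : ℝ × ℝ) (f : ℝ × ℝ → ℝ) : ℝ × ℝ → ℝ := fun p => fderiv ℝ f p v

lemma pd_contDiff {f : ℝ × ℝ → ℝ} (hf : ContDiff ℝ (⊤ : ℕ∞) f) (v : ℝ × ℝ) :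
    ContDiff ℝ (⊤ : ℕ∞) (pd v f) :=
  (hf.fderiv_right (by simp)).clm_apply contDiff_const

lemma pd_comm {f : ℝ × ℝ → ℝ} (hf : ContDiff ℝ (⊤ : ℕ∞) f) (v w p) :
    pd v (pd w f) p = pd w (pd v f) p := by
  have hdf : ContDiff ℝ (⊤ : ℕ∞) (fderiv ℝ f) := hf.fderiv_right (by simp)
  have h1 : ∀ u : ℝ × ℝ, fderiv ℝ (pd u f) p = (fderiv ℝ (fderiv ℝ f) p).flip u := by
    intro u
    have := fderiv_clm_apply (x := p) (c := fderiv ℝ f) (u := fun _ => u)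
      (hdf.differentiable (by simp) p) (differentiableAt_const u)
    simp only [fderiv_fun_const, Pi.zero_apply] at this
    simp at this
    exact this
  have hsymm := second_derivative_symmetric (f := f) (f' := fderiv ℝ f)
    (f'' := fderiv ℝ (fderiv ℝ f) p) (x := p)
    (fun y => (hf.differentiable (by simp) y).hasFDerivAt)
    ((hdf.differentiable (by simp) p).hasFDerivAt) v w
  simp only [pd, h1]
  simpa using hsymm

lemma pd_cx_mul (v : ℝ × ℝ) {c : ℝ → ℝ} {c' : ℝ} {f : ℝ × ℝ → ℝ} {p : ℝ × ℝ}
    (hc : HasDerivAt c c' p.1) (hf : DifferentiableAt ℝ f p) :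
    pd v (fun q => c q.1 * f q) p = c' * v.1 * f p + c p.1 * pd v f p := by
  have h1 : HasFDerivAt (fun q : ℝ × ℝ => c q.1)
      (c' • ContinuousLinearMap.fst ℝ ℝ ℝ) p :=
    hc.comp_hasFDerivAt p (hasFDerivAt_fst)
  have h2 := h1.fun_mul hf.hasFDerivAt
  rw [pd, h2.fderiv]
  simp only [pd]
  simp [mul_comm, ContinuousLinearMap.smul_apply]
  ring

lemma pd_ct_mul (v : ℝ × ℝ) {c : ℝ → ℝ} {c' : ℝ} {f : ℝ × ℝ → ℝ} {p : ℝ × ℝ}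
    (hc : HasDerivAt c c' p.2) (hf : DifferentiableAt ℝ f p) :
    pd v (fun q => c q.2 * f q) p = c' * v.2 * f p + c p.2 * pd v f p := by
  have h1 : HasFDerivAt (fun q : ℝ × ℝ => c q.2)
      (c' • ContinuousLinearMap.snd ℝ ℝ ℝ) p :=
    hc.comp_hasFDerivAt p (hasFDerivAt_snd)
  have h2 := h1.fun_mul hf.hasFDerivAt
  rw [pd, h2.fderiv]
  simp only [pd]
  simp [mul_comm, ContinuousLinearMap.smul_apply]
  ring

lemma pd_add (v : ℝ × ℝ) {f g : ℝ × ℝ → ℝ} {p : ℝ × ℝ}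
    (hf : DifferentiableAt ℝ f p) (hg : DifferentiableAt ℝ g p) :
    pd v (fun q => f q + g q) p = pd v f p + pd v g p := by
  rw [pd, fderiv_fun_add hf hg]; rfl

lemma deriv_x {f : ℝ × ℝ → ℝ} (hf : ContDiff ℝ (⊤ : ℕ∞) f) (x t : ℝ) :
    deriv (fun y => f (y, t)) x = pd (1, 0) f (x, t) := by
  have hline : HasDerivAt (fun y : ℝ => (y, t)) ((1 : ℝ), (0 : ℝ)) x :=
    (hasDerivAt_id x).prodMk (hasDerivAt_const x t)
  exact (((hf.differentiable (by simp) (x, t)).hasFDerivAt).comp_hasDerivAt x hline).deriv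

lemma deriv_t {f : ℝ × ℝ → ℝ} (hf : ContDiff ℝ (⊤ : ℕ∞) f) (x t : ℝ) :
    deriv (fun s => f (x, s)) t = pd (0, 1) f (x, t) := by
  have hline : HasDerivAt (fun s : ℝ => (x, s)) ((0 : ℝ), (1 : ℝ)) t :=
    (hasDerivAt_const t x).prodMk (hasDerivAt_id t)
  exact (((hf.differentiable (by simp) (x, t)).hasFDerivAt).comp_hasDerivAt t hline).deriv

lemma deriv_xx {f : ℝ × ℝ → ℝ} (hf : ContDiff ℝ (⊤ : ℕ∞) f) (x t : ℝ) :
    deriv (deriv fun y => f (y, t)) x = pd (1, 0) (pd (1, 0) f) (x, t) := by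
  have h1 : (deriv fun y => f (y, t)) = fun y => pd (1, 0) f (y, t) := by
    funext y; exact deriv_x hf y t
  rw [h1, deriv_x (pd_contDiff hf _) x t]

/-- Derivative of a 4-term sum with x-dependent coefficients. -/
lemma pd_S4 (v : ℝ × ℝ) {F0 F1 F2 F3 : ℝ × ℝ → ℝ} {p : ℝ × ℝ}
    (h0 : DifferentiableAt ℝ F0 p) (h1 : DifferentiableAt ℝ F1 p)
    (h2 : DifferentiableAt ℝ F2 p) (h3 : DifferentiableAt ℝ F3 p)
    {c0 c1 c2 c3 : ℝ → ℝ} {c0' c1' c2' c3' : ℝ}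
    (hc0 : HasDerivAt c0 c0' p.1) (hc1 : HasDerivAt c1 c1' p.1)
    (hc2 : HasDerivAt c2 c2' p.1) (hc3 : HasDerivAt c3 c3' p.1) :
    pd v (fun q => c0 q.1 * F0 q + c1 q.1 * F1 q + c2 q.1 * F2 q + c3 q.1 * F3 q) p
      = (c0' * v.1 * F0 p + c0 p.1 * pd v F0 p)
        + (c1' * v.1 * F1 p + c1 p.1 * pd v F1 p)
        + (c2' * v.1 * F2 p + c2 p.1 * pd v F2 p)
        + (c3' * v.1 * F3 p + c3 p.1 * pd v F3 p) := by
  have d0 : DifferentiableAt ℝ (fun q : ℝ × ℝ => c0 q.1 * F0 q) p :=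
    ((hc0.differentiableAt).comp p differentiableAt_fst).mul h0
  have d1 : DifferentiableAt ℝ (fun q : ℝ × ℝ => c1 q.1 * F1 q) p :=
    ((hc1.differentiableAt).comp p differentiableAt_fst).mul h1
  have d2 : DifferentiableAt ℝ (fun q : ℝ × ℝ => c2 q.1 * F2 q) p :=
    ((hc2.differentiableAt).comp p differentiableAt_fst).mul h2
  have d3 : DifferentiableAt ℝ (fun q : ℝ × ℝ => c3 q.1 * F3 q) p :=
    ((hc3.differentiableAt).comp p differentiableAt_fst).mul h3
  have d01 : DifferentiableAt ℝ (fun q : ℝ × ℝ => c0 q.1 * F0 q + c1 q.1 * F1 q) p := d0.add d1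
  have d012 : DifferentiableAt ℝ
      (fun q : ℝ × ℝ => c0 q.1 * F0 q + c1 q.1 * F1 q + c2 q.1 * F2 q) p := d01.add d2
  calc pd v (fun q => c0 q.1 * F0 q + c1 q.1 * F1 q + c2 q.1 * F2 q + c3 q.1 * F3 q) p
      = pd v (fun q => c0 q.1 * F0 q + c1 q.1 * F1 q + c2 q.1 * F2 q) p
        + pd v (fun q => c3 q.1 * F3 q) p := pd_add v d012 d3
    _ = pd v (fun q => c0 q.1 * F0 q + c1 q.1 * F1 q) p
        + pd v (fun q => c2 q.1 * F2 q) p + pd v (fun q => c3 q.1 * F3 q) p := by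
        rw [pd_add v d01 d2]
    _ = pd v (fun q => c0 q.1 * F0 q) p + pd v (fun q => c1 q.1 * F1 q) p
        + pd v (fun q => c2 q.1 * F2 q) p + pd v (fun q => c3 q.1 * F3 q) p := by
        rw [pd_add v d0 d1]
    _ = _ := by
        rw [pd_cx_mul v hc0 h0, pd_cx_mul v hc1 h1, pd_cx_mul v hc2 h2, pd_cx_mul v hc3 h3]





end FPEaux

open FPEaux

/-- `u : ℝ × ℝ → ℝ`, written `u (x, t)`, solves the Fokker–Planck equation
`u_t = -a₂ u - (a₂ x + a₁) u_x + (1/2) u_xx`. -/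
def IsFPESol (a1 a2 : ℝ) (u : ℝ × ℝ → ℝ) : Prop :=
  ∀ x t : ℝ,
    deriv (fun s => u (x, s)) t =
      -a2 * u (x, t) - (a2 * x + a1) * deriv (fun y => u (y, t)) x
        + (1 / 2) * deriv (deriv fun y => u (y, t)) x

theorem stmt_0 (a1 a2 : ℝ) (ha2 : a2 ≠ 0) (α : ℝ × ℝ → ℝ)
    (hsmooth : ContDiff ℝ (⊤ : ℕ∞) α) (hα : IsFPESol a1 a2 α) :
    IsFPESol a1 a2 (fun p : ℝ × ℝ =>
      Real.exp (-2 * a2 * p.2) *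
        (deriv (fun s => α (p.1, s)) p.2
          - (a2 * p.1 + a1) * deriv (fun y => α (y, p.2)) p.1
          + 2 * (a2 * p.1 + a1) ^ 2 * α p)) := by
  -- coefficient derivatives
  have hdL : ∀ y : ℝ, HasDerivAt (fun z : ℝ => a2 * z + a1) a2 y := fun y => by
    simpa using ((hasDerivAt_id y).const_mul a2).add_const a1
  have hdLneg : ∀ y : ℝ, HasDerivAt (fun z : ℝ => -(a2 * z + a1)) (-a2) y := fun y => (hdL y).neg
  have hc0 : ∀ y : ℝ, HasDerivAt (fun z : ℝ => 2*(a2*z+a1)^2 - a2) (4*a2*(a2*y+a1)) y := by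
    intro y
    have h := (((hdL y).fun_pow 2).const_mul 2).sub_const a2
    exact h.congr_deriv (by rw [show (2:ℕ) - 1 = 1 from rfl]; push_cast; ring)
  have hc1 : ∀ y : ℝ, HasDerivAt (fun z : ℝ => -(2*(a2*z+a1))) (-(2*a2)) y := fun y => by
    simpa using ((hdL y).const_mul 2).fun_neg
  have hK : ∀ (k : ℝ) (y : ℝ), HasDerivAt (fun _ : ℝ => k) 0 y := fun k y => hasDerivAt_const y k
  have hd0 : ∀ y : ℝ, HasDerivAt (fun z : ℝ => 4*a2*(a2*z+a1)) (4*a2*a2) y := fun y => by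
    simpa [mul_assoc] using (hdL y).const_mul (4*a2)
  have hd1 : ∀ y : ℝ, HasDerivAt (fun z : ℝ => 2*(a2*z+a1)^2 - a2 - 2*a2) (4*a2*(a2*y+a1)) y :=
    fun y => (hc0 y).sub_const (2*a2)
  have hexp : ∀ s : ℝ, HasDerivAt (fun r : ℝ => Real.exp (-2*a2*r))
      (Real.exp (-2*a2*s) * (-2*a2)) s := fun s => by
    exact (by simpa using (hasDerivAt_id s).const_mul (-2*a2) :
      HasDerivAt (fun r : ℝ => -2*a2*r) (-2*a2) s).exp
  -- named partial derivatives of α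
  obtain ⟨A1, hA1⟩ : ∃ f, pd (1, 0) α = f := ⟨_, rfl⟩
  obtain ⟨A2, hA2⟩ : ∃ f, pd (1, 0) A1 = f := ⟨_, rfl⟩
  obtain ⟨A3, hA3⟩ : ∃ f, pd (1, 0) A2 = f := ⟨_, rfl⟩
  obtain ⟨A4, hA4⟩ : ∃ f, pd (1, 0) A3 = f := ⟨_, rfl⟩
  obtain ⟨T0, hT0⟩ : ∃ f, pd (0, 1) α = f := ⟨_, rfl⟩
  have hsA1 : ContDiff ℝ (⊤ : ℕ∞) A1 := hA1 ▸ pd_contDiff hsmooth _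
  have hsA2 : ContDiff ℝ (⊤ : ℕ∞) A2 := hA2 ▸ pd_contDiff hsA1 _
  have hsA3 : ContDiff ℝ (⊤ : ℕ∞) A3 := hA3 ▸ pd_contDiff hsA2 _
  have hsA4 : ContDiff ℝ (⊤ : ℕ∞) A4 := hA4 ▸ pd_contDiff hsA3 _
  have dα : Differentiable ℝ α := hsmooth.differentiable (by simp)
  have dA1 : Differentiable ℝ A1 := hsA1.differentiable (by simp)
  have dA2 : Differentiable ℝ A2 := hsA2.differentiable (by simp)
  have dA3 : Differentiable ℝ A3 := hsA3.differentiable (by simp)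
  have dA4 : Differentiable ℝ A4 := hsA4.differentiable (by simp)
  -- the FPE, rewritten
  have hT : T0 = fun q : ℝ × ℝ =>
      (-a2) * α q + (-(a2*q.1+a1)) * A1 q + (1/2) * A2 q + 0 * A3 q := by
    funext p
    have h := hα p.1 p.2
    rw [deriv_t hsmooth, deriv_x hsmooth, deriv_xx hsmooth] at h
    simp only [Prod.mk.eta] at h
    rw [hA1, hA2, hT0] at h
    rw [h]; ring
  -- t-derivative of A1 (via Clairaut)
  have hE2A1 : pd (0, 1) A1 = fun q : ℝ × ℝ =>
      (-(2*a2)) * A1 q + (-(a2*q.1+a1)) * A2 q + (1/2) * A3 q + 0 * A4 q := by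
    funext p
    have hswap : pd (0, 1) A1 p = pd (1, 0) T0 p := by
      rw [← hA1, ← hT0]; exact pd_comm hsmooth _ _ p
    rw [hswap, hT]
    have H := pd_S4 ((1:ℝ), (0:ℝ)) (dα p) (dA1 p) (dA2 p) (dA3 p)
      (hK (-a2) p.1) (hdLneg p.1) (hK (1/2) p.1) (hK 0 p.1)
    rw [hA1, hA2, hA3, hA4] at H
    exact H.trans (by norm_num; try ring)
  -- t-derivative of A2 (via Clairaut)
  have hE2A2 : ∀ p : ℝ × ℝ, pd (0, 1) A2 p =
      (-(3*a2)) * A2 p + (-(a2*p.1+a1)) * A3 p + (1/2) * A4 p := by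
    intro p
    have hswap : pd (0, 1) A2 p = pd (1, 0) (pd (0, 1) A1) p := by
      rw [← hA2]; exact pd_comm hsA1 _ _ p
    rw [hswap, hE2A1]
    have H := pd_S4 ((1:ℝ), (0:ℝ)) (dA1 p) (dA2 p) (dA3 p) (dA4 p)
      (hK (-(2*a2)) p.1) (hdLneg p.1) (hK (1/2) p.1) (hK 0 p.1)
    rw [hA2, hA3, hA4] at H
    exact H.trans (by norm_num; try ring)
  -- the auxiliary function g
  obtain ⟨g, hg⟩ : ∃ f : ℝ × ℝ → ℝ, (fun q : ℝ × ℝ =>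
      (2*(a2*q.1+a1)^2 - a2) * α q + (-(2*(a2*q.1+a1))) * A1 q
        + (1/2) * A2 q + 0 * A3 q) = f := ⟨_, rfl⟩
  have hsg : ContDiff ℝ (⊤ : ℕ∞) g := by
    rw [← hg]; fun_prop
  have dg : Differentiable ℝ g := hsg.differentiable (by simp)
  -- x-derivative of g
  have hDg : pd (1, 0) g = fun q : ℝ × ℝ =>
      4*a2*(a2*q.1+a1) * α q + (2*(a2*q.1+a1)^2 - a2 - 2*a2) * A1 q
        + (-(2*(a2*q.1+a1))) * A2 q + (1/2) * A3 q := by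
    funext p
    rw [← hg]
    have H := pd_S4 ((1:ℝ), (0:ℝ)) (dα p) (dA1 p) (dA2 p) (dA3 p)
      (hc0 p.1) (hc1 p.1) (hK (1/2) p.1) (hK 0 p.1)
    rw [hA1, hA2, hA3, hA4] at H
    exact H.trans (by norm_num; try ring)
  -- second x-derivative of g
  have hDDg : ∀ p : ℝ × ℝ, pd (1, 0) (pd (1, 0) g) p =
      4*a2*a2 * α p + 8*a2*(a2*p.1+a1) * A1 p + (2*(a2*p.1+a1)^2 - 5*a2) * A2 p
        + (-(2*(a2*p.1+a1))) * A3 p + (1/2) * A4 p := by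
    intro p
    rw [hDg]
    have H := pd_S4 ((1:ℝ), (0:ℝ)) (dα p) (dA1 p) (dA2 p) (dA3 p)
      (hd0 p.1) (hd1 p.1) (hc1 p.1) (hK (1/2) p.1)
    rw [hA1, hA2, hA3, hA4] at H
    exact H.trans (by norm_num; try ring)
  -- t-derivative of g
  have hgt : ∀ p : ℝ × ℝ, pd (0, 1) g p =
      (2*(a2*p.1+a1)^2 - a2) * ((-a2) * α p + (-(a2*p.1+a1)) * A1 p + (1/2) * A2 p)
        + (-(2*(a2*p.1+a1))) * ((-(2*a2)) * A1 p + (-(a2*p.1+a1)) * A2 p + (1/2) * A3 p)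
        + (1/2) * ((-(3*a2)) * A2 p + (-(a2*p.1+a1)) * A3 p + (1/2) * A4 p) := by
    intro p
    rw [← hg]
    have H := pd_S4 ((0:ℝ), (1:ℝ)) (dα p) (dA1 p) (dA2 p) (dA3 p)
      (hc0 p.1) (hc1 p.1) (hK (1/2) p.1) (hK 0 p.1)
    rw [hT0, hT, hE2A1, hE2A2 p] at H
    exact H.trans (by norm_num; try ring)
  -- the new solution F
  obtain ⟨F, hF⟩ : ∃ f : ℝ × ℝ → ℝ,
      (fun q : ℝ × ℝ => Real.exp (-2*a2*q.2) * g q) = f := ⟨_, rfl⟩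
  have hsF : ContDiff ℝ (⊤ : ℕ∞) F := by
    rw [← hF]; fun_prop
  have hFval : ∀ p : ℝ × ℝ, F p = Real.exp (-2*a2*p.2) * g p := fun p => by rw [← hF]
  have hFx : pd (1, 0) F = fun q : ℝ × ℝ => Real.exp (-2*a2*q.2) * pd (1, 0) g q := by
    funext p
    rw [← hF]
    exact (pd_ct_mul ((1:ℝ), (0:ℝ)) (hexp p.2) (dg p)).trans (by norm_num; try ring)
  have hFxx : ∀ p : ℝ × ℝ, pd (1, 0) (pd (1, 0) F) p =
      Real.exp (-2*a2*p.2) * pd (1, 0) (pd (1, 0) g) p := by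
    intro p
    rw [hFx]
    exact (pd_ct_mul ((1:ℝ), (0:ℝ)) (hexp p.2)
      ((pd_contDiff hsg _).differentiable (by simp) p)).trans (by norm_num; try ring)
  have hFt : ∀ p : ℝ × ℝ, pd (0, 1) F p =
      Real.exp (-2*a2*p.2) * (-2*a2) * g p + Real.exp (-2*a2*p.2) * pd (0, 1) g p := by
    intro p
    rw [← hF]
    exact (pd_ct_mul ((0:ℝ), (1:ℝ)) (hexp p.2) (dg p)).trans (by norm_num; try ring)
  -- the statement's function is F
  have hstmt : (fun p : ℝ × ℝ =>
      Real.exp (-2 * a2 * p.2) *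
        (deriv (fun s => α (p.1, s)) p.2
          - (a2 * p.1 + a1) * deriv (fun y => α (y, p.2)) p.1
          + 2 * (a2 * p.1 + a1) ^ 2 * α p)) = F := by
    funext p
    rw [deriv_t hsmooth, deriv_x hsmooth]
    simp only [Prod.mk.eta]
    rw [hA1, hT0, ← hF, ← hg]
    have := congrFun hT p
    simp only [] at this ⊢
    rw [this]; ring
  rw [hstmt]
  intro x t
  rw [deriv_t hsF, deriv_x hsF, deriv_xx hsF, hFt, hFxx, hFx, hFval]
  rw [hgt, hDDg, hDg]
  rw [show g (x, t) = (2*(a2*x+a1)^2 - a2) * α (x, t) + (-(2*(a2*x+a1))) * A1 (x, t)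
        + (1/2) * A2 (x, t) + 0 * A3 (x, t) from (congrFun hg (x, t)).symm]
  simp only []
  ring
end
end

section
/- Let α : ℝ² → ℝ be a smooth solution of the Fokker–Planck equation. Then the function f₂(x,t) = (e^{-a₂t}/a₂)·[(1/2)·α_x(x,t) − (a₂x+a₁)·α(x,t)] is also a solution of the Fokker–Planck equation. -/
noncomputable section

def pd (v : ℝ × ℝ) (f : ℝ × ℝ → ℝ) : ℝ × ℝ → ℝ := fun p => fderiv ℝ f p v

lemma pd_contDiff {f : ℝ × ℝ → ℝ} (hf : ContDiff ℝ (⊤ : ℕ∞) f) (v : ℝ × ℝ) :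
    ContDiff ℝ (⊤ : ℕ∞) (pd v f) :=
  (hf.fderiv_right (by simp)).clm_apply contDiff_const

lemma hasDerivAt_slice1 {f : ℝ × ℝ → ℝ} (hf : Differentiable ℝ f) (x t : ℝ) :
    HasDerivAt (fun y => f (y, t)) (pd (1, 0) f (x, t)) x := by
  have hline : HasDerivAt (fun y : ℝ => ((y, t) : ℝ × ℝ)) ((1 : ℝ), (0 : ℝ)) x :=
    (hasDerivAt_id x).prodMk (hasDerivAt_const x t)
  exact (hf (x, t)).hasFDerivAt.comp_hasDerivAt x hline

lemma hasDerivAt_slice2 {f : ℝ × ℝ → ℝ} (hf : Differentiable ℝ f) (x t : ℝ) :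
    HasDerivAt (fun s => f (x, s)) (pd (0, 1) f (x, t)) t := by
  have hline : HasDerivAt (fun s : ℝ => ((x, s) : ℝ × ℝ)) ((0 : ℝ), (1 : ℝ)) t :=
    (hasDerivAt_const t x).prodMk (hasDerivAt_id t)
  exact (hf (x, t)).hasFDerivAt.comp_hasDerivAt t hline

lemma pd_comm {f : ℝ × ℝ → ℝ} (hf : ContDiff ℝ (⊤ : ℕ∞) f) (v w : ℝ × ℝ) (p : ℝ × ℝ) :
    pd v (pd w f) p = pd w (pd v f) p := by
  have hdf : Differentiable ℝ (fderiv ℝ f) :=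
    (hf.fderiv_right (m := (⊤ : ℕ∞)) ((by simp))).differentiable (by simp)
  have key : ∀ a u : ℝ × ℝ, pd a (pd u f) p = fderiv ℝ (fderiv ℝ f) p a u := by
    intro a u
    have h1 : HasFDerivAt (fun q => fderiv ℝ f q u)
        ((fderiv ℝ (fderiv ℝ f) p).flip u) p := by
      have := (hdf p).hasFDerivAt.clm_apply (hasFDerivAt_const u p)
      simpa using this
    unfold pd
    simpa using congrFun (congrArg DFunLike.coe h1.fderiv) a
  rw [key v w, key w v]
  exact second_derivative_symmetric (fun y => ((hf.differentiable (by simp)) y).hasFDerivAt)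
    (hdf p).hasFDerivAt v w

lemma pd_master (a1 a2 c1 c2 : ℝ) (h1 h2 h3 : ℝ × ℝ → ℝ)
    (hh1 : ContDiff ℝ (⊤ : ℕ∞) h1) (hh2 : ContDiff ℝ (⊤ : ℕ∞) h2) (hh3 : ContDiff ℝ (⊤ : ℕ∞) h3)
    (v p : ℝ × ℝ) :
    pd v (fun q => Real.exp (-a2 * q.2) / a2 *
        (c1 * h1 q + c2 * h2 q - (a2 * q.1 + a1) * h3 q)) p
    = Real.exp (-a2 * p.2) / a2 *
        ((-a2 * v.2) * (c1 * h1 p + c2 * h2 p - (a2 * p.1 + a1) * h3 p)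
          + (c1 * pd v h1 p + c2 * pd v h2 p
              - (a2 * v.1 * h3 p + (a2 * p.1 + a1) * pd v h3 p))) := by
  have h0 : HasFDerivAt (fun q : ℝ × ℝ => -a2 * q.2)
      ((-a2) • ContinuousLinearMap.snd ℝ ℝ ℝ) p := hasFDerivAt_snd.const_mul (-a2)
  have hexp := (Real.hasDerivAt_exp (-a2 * p.2)).comp_hasFDerivAt p h0
  have hEc : HasFDerivAt (fun q : ℝ × ℝ => Real.exp (-a2 * q.2) / a2)
      ((Real.exp (-a2 * p.2) * (-a2) / a2) • ContinuousLinearMap.snd ℝ ℝ ℝ) p := by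
    have h := hexp.mul_const (a2⁻¹)
    simp only [Function.comp] at h
    have h2 : (fun y : ℝ × ℝ => Real.exp (-a2 * y.2) * a2⁻¹)
        = (fun q : ℝ × ℝ => Real.exp (-a2 * q.2) / a2) := by
      funext q; rw [div_eq_mul_inv]
    rw [h2] at h
    refine h.congr_fderiv ?_
    rw [smul_smul, smul_smul]
    congr 1
    ring
  have hLp : HasFDerivAt (fun q : ℝ × ℝ => a2 * q.1 + a1)
      (a2 • ContinuousLinearMap.fst ℝ ℝ ℝ) p := (hasFDerivAt_fst.const_mul a2).add_const a1
  have H1 := (hh1.differentiable (by simp) p).hasFDerivAt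
  have H2 := (hh2.differentiable (by simp) p).hasFDerivAt
  have H3 := (hh3.differentiable (by simp) p).hasFDerivAt
  have hbig := ((H1.const_mul c1).add (H2.const_mul c2)).sub (hLp.mul H3)
  have hfull : HasFDerivAt (fun q : ℝ × ℝ => Real.exp (-a2 * q.2) / a2 *
      (c1 * h1 q + c2 * h2 q - (a2 * q.1 + a1) * h3 q)) _ p := hEc.mul hbig
  simp only [pd]
  rw [hfull.fderiv]
  simp only [ContinuousLinearMap.add_apply, ContinuousLinearMap.smul_apply,
    ContinuousLinearMap.sub_apply, ContinuousLinearMap.coe_smul', Pi.smul_apply,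
    ContinuousLinearMap.coe_fst', ContinuousLinearMap.coe_snd', smul_eq_mul]
  ring

lemma pd_lin (a1 a2 c1 c2 : ℝ) (h1 h2 h3 : ℝ × ℝ → ℝ)
    (hh1 : ContDiff ℝ (⊤ : ℕ∞) h1) (hh2 : ContDiff ℝ (⊤ : ℕ∞) h2) (hh3 : ContDiff ℝ (⊤ : ℕ∞) h3)
    (v p : ℝ × ℝ) :
    pd v (fun q => c1 * h1 q + c2 * h2 q - (a2 * q.1 + a1) * h3 q) p
    = c1 * pd v h1 p + c2 * pd v h2 p
        - (a2 * v.1 * h3 p + (a2 * p.1 + a1) * pd v h3 p) := by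
  have hLp : HasFDerivAt (fun q : ℝ × ℝ => a2 * q.1 + a1)
      (a2 • ContinuousLinearMap.fst ℝ ℝ ℝ) p := (hasFDerivAt_fst.const_mul a2).add_const a1
  have H1 := (hh1.differentiable (by simp) p).hasFDerivAt
  have H2 := (hh2.differentiable (by simp) p).hasFDerivAt
  have H3 := (hh3.differentiable (by simp) p).hasFDerivAt
  have hfull : HasFDerivAt (fun q : ℝ × ℝ =>
      c1 * h1 q + c2 * h2 q - (a2 * q.1 + a1) * h3 q) _ p :=
    ((H1.const_mul c1).add (H2.const_mul c2)).sub (hLp.mul H3)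
  simp only [pd]
  rw [hfull.fderiv]
  simp only [ContinuousLinearMap.add_apply, ContinuousLinearMap.smul_apply,
    ContinuousLinearMap.sub_apply, ContinuousLinearMap.coe_smul', Pi.smul_apply,
    ContinuousLinearMap.coe_fst', ContinuousLinearMap.coe_snd', smul_eq_mul]
  ring

lemma isFPESol_iff_pd {a1 a2 : ℝ} {u : ℝ × ℝ → ℝ} (hu : ContDiff ℝ (⊤ : ℕ∞) u) :
    IsFPESol a1 a2 u ↔ ∀ p : ℝ × ℝ,
      pd (0, 1) u p = -a2 * u p - (a2 * p.1 + a1) * pd (1, 0) u p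
        + (1 / 2) * pd (1, 0) (pd (1, 0) u) p := by
  have hd := hu.differentiable (by simp)
  have hdA1 := (pd_contDiff hu (1, 0)).differentiable (by simp)
  have key : ∀ x t : ℝ,
      (deriv (fun s => u (x, s)) t =
        -a2 * u (x, t) - (a2 * x + a1) * deriv (fun y => u (y, t)) x
          + (1 / 2) * deriv (deriv fun y => u (y, t)) x)
      ↔ (pd (0, 1) u (x, t) = -a2 * u (x, t) - (a2 * x + a1) * pd (1, 0) u (x, t)
          + (1 / 2) * pd (1, 0) (pd (1, 0) u) (x, t)) := by
    intro x t
    rw [(hasDerivAt_slice2 hd x t).deriv, (hasDerivAt_slice1 hd x t).deriv,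
      show (deriv fun y => u (y, t)) = fun y => pd (1, 0) u (y, t) from
        funext fun y => (hasDerivAt_slice1 hd y t).deriv,
      (hasDerivAt_slice1 hdA1 x t).deriv]
  unfold IsFPESol
  constructor
  · intro h p
    exact (key p.1 p.2).mp (h p.1 p.2)
  · intro h x t
    exact (key x t).mpr (h (x, t))

theorem stmt_1 (a1 a2 : ℝ) (ha2 : a2 ≠ 0) (α : ℝ × ℝ → ℝ)
    (hsmooth : ContDiff ℝ (⊤ : ℕ∞) α) (hα : IsFPESol a1 a2 α) :
    IsFPESol a1 a2 (fun p : ℝ × ℝ =>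
      (Real.exp (-a2 * p.2) / a2) *
        ((1 / 2) * deriv (fun y => α (y, p.2)) p.1
          - (a2 * p.1 + a1) * α p)) := by
  have hd := hsmooth.differentiable (by simp)
  have hA1s : ContDiff ℝ (⊤ : ℕ∞) (pd (1, 0) α) := pd_contDiff hsmooth _
  have hA2s : ContDiff ℝ (⊤ : ℕ∞) (pd (1, 0) (pd (1, 0) α)) := pd_contDiff hA1s _
  have hEcs : ContDiff ℝ (⊤ : ℕ∞) (fun q : ℝ × ℝ => Real.exp (-a2 * q.2) / a2) :=
    (Real.contDiff_exp.comp (contDiff_const.mul contDiff_snd)).div_const a2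
  have hLs : ContDiff ℝ (⊤ : ℕ∞) (fun q : ℝ × ℝ => a2 * q.1 + a1) :=
    (contDiff_const.mul contDiff_fst).add contDiff_const
  have hFeq : (fun p : ℝ × ℝ =>
      (Real.exp (-a2 * p.2) / a2) *
        ((1 / 2) * deriv (fun y => α (y, p.2)) p.1
          - (a2 * p.1 + a1) * α p))
      = fun q : ℝ × ℝ => Real.exp (-a2 * q.2) / a2 *
          ((1 / 2) * pd (1, 0) α q + 0 * α q - (a2 * q.1 + a1) * α q) := by
    funext p
    rw [(hasDerivAt_slice1 hd p.1 p.2).deriv]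
    ring_nf
  rw [hFeq]
  have hFs : ContDiff ℝ (⊤ : ℕ∞) (fun q : ℝ × ℝ => Real.exp (-a2 * q.2) / a2 *
      ((1 / 2) * pd (1, 0) α q + 0 * α q - (a2 * q.1 + a1) * α q)) :=
    hEcs.mul (((contDiff_const.mul hA1s).add (contDiff_const.mul hsmooth)).sub
      (hLs.mul hsmooth))
  rw [isFPESol_iff_pd hFs]
  intro p
  have hB : ∀ q : ℝ × ℝ, pd (0, 1) α q = -a2 * α q - (a2 * q.1 + a1) * pd (1, 0) α q
      + (1 / 2) * pd (1, 0) (pd (1, 0) α) q := (isFPESol_iff_pd hsmooth).mp hα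
  -- first x-derivative of F as a function
  have hFx : pd (1, 0) (fun q : ℝ × ℝ => Real.exp (-a2 * q.2) / a2 *
      ((1 / 2) * pd (1, 0) α q + 0 * α q - (a2 * q.1 + a1) * α q))
      = fun q : ℝ × ℝ => Real.exp (-a2 * q.2) / a2 *
          ((1 / 2) * pd (1, 0) (pd (1, 0) α) q + (-a2) * α q
            - (a2 * q.1 + a1) * pd (1, 0) α q) := by
    funext q
    rw [pd_master a1 a2 (1 / 2) 0 (pd (1, 0) α) α α hA1s hsmooth hsmooth (1, 0) q]
    ring_nf
  rw [hFx]
  -- second x-derivative, pointwise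
  rw [pd_master a1 a2 (1 / 2) (-a2) (pd (1, 0) (pd (1, 0) α)) α (pd (1, 0) α)
      hA2s hsmooth hA1s (1, 0) p]
  -- t-derivative, pointwise
  rw [pd_master a1 a2 (1 / 2) 0 (pd (1, 0) α) α α hA1s hsmooth hsmooth (0, 1) p]
  -- mixed partial swap
  rw [pd_comm hsmooth (0, 1) (1, 0) p]
  -- express pd (1,0) (pd (0,1) α) via the equation
  have hBfun : pd (0, 1) α = fun q : ℝ × ℝ => (-a2) * α q
      + (1 / 2) * pd (1, 0) (pd (1, 0) α) q - (a2 * q.1 + a1) * pd (1, 0) α q := by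
    funext q; rw [hB q]; ring
  rw [hBfun,
    pd_lin a1 a2 (-a2) (1 / 2) α (pd (1, 0) (pd (1, 0) α)) (pd (1, 0) α)
      hsmooth hA2s hA1s (1, 0) p]
  simp only []
  norm_num
  ring
end
end

section
/- Let α : ℝ² → ℝ be a smooth solution of the Fokker–Planck equation. Then the function f₃(x,t) = e^{2a₂t}·[α_t(x,t) + (a₂x+a₁)·α_x(x,t) + a₂·α(x,t)] is also a solution of the Fokker–Planck equation. -/
noncomputable section


noncomputable section

def Dx (u : ℝ × ℝ → ℝ) : ℝ × ℝ → ℝ := fun p => fderiv ℝ u p (1, 0)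
def Dt (u : ℝ × ℝ → ℝ) : ℝ × ℝ → ℝ := fun p => fderiv ℝ u p (0, 1)

lemma contDiff_Dx {u : ℝ × ℝ → ℝ} (hu : ContDiff ℝ (⊤ : ℕ∞) u) : ContDiff ℝ (⊤ : ℕ∞) (Dx u) :=
  (hu.fderiv_right (by simp)).clm_apply contDiff_const

lemma hasF {u : ℝ × ℝ → ℝ} (hu : ContDiff ℝ (⊤ : ℕ∞) u) (p : ℝ × ℝ) :
    HasFDerivAt u (fderiv ℝ u p) p :=
  (hu.differentiable (by simp) p).hasFDerivAt

lemma Dx_eq {f : ℝ × ℝ → ℝ} {f' : ℝ × ℝ →L[ℝ] ℝ} {p : ℝ × ℝ} (h : HasFDerivAt f f' p) :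
    Dx f p = f' (1, 0) := by rw [Dx, h.fderiv]

lemma Dt_eq {f : ℝ × ℝ → ℝ} {f' : ℝ × ℝ →L[ℝ] ℝ} {p : ℝ × ℝ} (h : HasFDerivAt f f' p) :
    Dt f p = f' (0, 1) := by rw [Dt, h.fderiv]

lemma deriv_fst {u : ℝ × ℝ → ℝ} (hu : ContDiff ℝ (⊤ : ℕ∞) u) (x t : ℝ) :
    deriv (fun y => u (y, t)) x = Dx u (x, t) := by
  have h2 : HasDerivAt (fun y : ℝ => (y, t)) ((1 : ℝ), (0 : ℝ)) x :=
    (hasDerivAt_id x).prodMk (hasDerivAt_const x t)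
  exact ((hasF hu (x, t)).comp_hasDerivAt x h2).deriv

lemma deriv_snd {u : ℝ × ℝ → ℝ} (hu : ContDiff ℝ (⊤ : ℕ∞) u) (x t : ℝ) :
    deriv (fun s => u (x, s)) t = Dt u (x, t) := by
  have h2 : HasDerivAt (fun s : ℝ => (x, s)) ((0 : ℝ), (1 : ℝ)) t :=
    (hasDerivAt_const t x).prodMk (hasDerivAt_id t)
  exact ((hasF hu (x, t)).comp_hasDerivAt t h2).deriv

lemma deriv2_fst {u : ℝ × ℝ → ℝ} (hu : ContDiff ℝ (⊤ : ℕ∞) u) (x t : ℝ) :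
    deriv (deriv fun y => u (y, t)) x = Dx (Dx u) (x, t) := by
  have h : (deriv fun y => u (y, t)) = fun y => Dx u (y, t) := by
    funext y; exact deriv_fst hu y t
  rw [h]; exact deriv_fst (contDiff_Dx hu) x t

lemma Dx_Dt_comm {u : ℝ × ℝ → ℝ} (hu : ContDiff ℝ (⊤ : ℕ∞) u) : Dt (Dx u) = Dx (Dt u) := by
  funext p
  have hd : ∀ q, HasFDerivAt u (fderiv ℝ u q) q := fun q => hasF hu q
  have h2 : HasFDerivAt (fun q => fderiv ℝ u q) (fderiv ℝ (fderiv ℝ u) p) p :=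
    (((hu.fderiv_right (m := 1) (by exact WithTop.coe_le_coe.mpr le_top)).differentiable one_ne_zero) p).hasFDerivAt
  have sym := second_derivative_symmetric hd h2 ((0:ℝ), (1:ℝ)) ((1:ℝ), (0:ℝ))
  have e1 : HasFDerivAt (Dx u)
      ((ContinuousLinearMap.apply ℝ ℝ ((1:ℝ), (0:ℝ))).comp (fderiv ℝ (fderiv ℝ u) p)) p :=
    (ContinuousLinearMap.apply ℝ ℝ ((1:ℝ), (0:ℝ))).hasFDerivAt.comp p h2
  have e2 : HasFDerivAt (Dt u)
      ((ContinuousLinearMap.apply ℝ ℝ ((0:ℝ), (1:ℝ))).comp (fderiv ℝ (fderiv ℝ u) p)) p :=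
    (ContinuousLinearMap.apply ℝ ℝ ((0:ℝ), (1:ℝ))).hasFDerivAt.comp p h2
  rw [Dt_eq e1, Dx_eq e2]
  simpa using sym

lemma hc (a1 a2 : ℝ) (p : ℝ × ℝ) :
    HasFDerivAt (fun q : ℝ × ℝ => a2 * q.1 + a1)
      (a2 • ContinuousLinearMap.fst ℝ ℝ ℝ) p :=
  (((ContinuousLinearMap.fst ℝ ℝ ℝ).hasFDerivAt).const_mul a2).add_const a1

lemma hexp (a2 : ℝ) (p : ℝ × ℝ) :
    HasFDerivAt (fun q : ℝ × ℝ => Real.exp (2 * a2 * q.2))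
      (Real.exp (2 * a2 * p.2) • ((2 * a2) • ContinuousLinearMap.snd ℝ ℝ ℝ)) p := by
  have h1 : HasFDerivAt (fun q : ℝ × ℝ => 2 * a2 * q.2)
      ((2 * a2) • ContinuousLinearMap.snd ℝ ℝ ℝ) p :=
    ((ContinuousLinearMap.snd ℝ ℝ ℝ).hasFDerivAt).const_mul (2 * a2)
  exact (Real.hasDerivAt_exp (2 * a2 * p.2)).comp_hasFDerivAt p h1

theorem stmt_2 (a1 a2 : ℝ) (ha2 : a2 ≠ 0) (α : ℝ × ℝ → ℝ)
    (hsmooth : ContDiff ℝ (⊤ : ℕ∞) α) (hα : IsFPESol a1 a2 α) :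
    IsFPESol a1 a2 (fun p : ℝ × ℝ =>
      Real.exp (2 * a2 * p.2) *
        (deriv (fun s => α (p.1, s)) p.2
          + (a2 * p.1 + a1) * deriv (fun y => α (y, p.2)) p.1
          + a2 * α p)) := by
  have hA : ContDiff ℝ (⊤ : ℕ∞) (Dx α) := contDiff_Dx hsmooth
  have hB : ContDiff ℝ (⊤ : ℕ∞) (Dx (Dx α)) := contDiff_Dx hA
  have hC : ContDiff ℝ (⊤ : ℕ∞) (Dx (Dx (Dx α))) := contDiff_Dx hB
  have hD : ContDiff ℝ (⊤ : ℕ∞) (Dx (Dx (Dx (Dx α)))) := contDiff_Dx hC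
  have hPDE : ∀ p : ℝ × ℝ, Dt α p =
      -(a2 * α p) - (a2 * p.1 + a1) * Dx α p + (1/2) * Dx (Dx α) p := by
    intro p
    have h := hα p.1 p.2
    rw [deriv_snd hsmooth, deriv_fst hsmooth, deriv2_fst hsmooth] at h
    simpa using h
  have h1 : Dx (Dt α) = fun p =>
      -(2 * a2 * Dx α p) - (a2 * p.1 + a1) * Dx (Dx α) p + (1/2) * Dx (Dx (Dx α)) p := by
    rw [funext hPDE]
    funext p
    have h := ((((hasF hsmooth p).const_mul a2).neg).sub
        ((hc a1 a2 p).mul (hasF hA p))).add ((hasF hB p).const_mul (1/2))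
    refine (Dx_eq h).trans ?_
    simp [Dx, smul_smul]
    ring
  have h2 : Dx (Dx (Dt α)) = fun p =>
      -(3 * a2 * Dx (Dx α) p) - (a2 * p.1 + a1) * Dx (Dx (Dx α)) p
        + (1/2) * Dx (Dx (Dx (Dx α))) p := by
    rw [h1]
    funext p
    have h := ((((hasF hA p).const_mul (2 * a2)).neg).sub
        ((hc a1 a2 p).mul (hasF hB p))).add ((hasF hC p).const_mul (1/2))
    refine (Dx_eq h).trans ?_
    simp [Dx, smul_smul]
    ring
  have hDtB : Dt (Dx (Dx α)) = fun p =>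
      -(3 * a2 * Dx (Dx α) p) - (a2 * p.1 + a1) * Dx (Dx (Dx α)) p
        + (1/2) * Dx (Dx (Dx (Dx α))) p := by
    rw [Dx_Dt_comm hA, Dx_Dt_comm hsmooth, h2]
  -- the target function equals G
  have hG : ContDiff ℝ (⊤ : ℕ∞) (fun p : ℝ × ℝ =>
      Real.exp (2 * a2 * p.2) * ((1/2) * Dx (Dx α) p)) :=
    (Real.contDiff_exp.comp ((contDiff_const.mul contDiff_snd))).mul (contDiff_const.mul hB)
  have key : (fun p : ℝ × ℝ =>
      Real.exp (2 * a2 * p.2) *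
        (deriv (fun s => α (p.1, s)) p.2
          + (a2 * p.1 + a1) * deriv (fun y => α (y, p.2)) p.1
          + a2 * α p)) = (fun p : ℝ × ℝ =>
      Real.exp (2 * a2 * p.2) * ((1/2) * Dx (Dx α) p)) := by
    funext p
    rw [deriv_snd hsmooth, deriv_fst hsmooth]
    have h := hPDE p
    simp only [Prod.mk.eta] at *
    rw [h]
    ring
  rw [key]
  intro x t
  rw [deriv_snd hG, deriv_fst hG, deriv2_fst hG]
  have eDxFun : Dx (fun p : ℝ × ℝ => Real.exp (2 * a2 * p.2) * ((1/2) * Dx (Dx α) p))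
      = fun p => Real.exp (2 * a2 * p.2) * ((1/2) * Dx (Dx (Dx α)) p) := by
    funext p
    have h := (hexp a2 p).mul ((hasF hB p).const_mul (1/2))
    refine (Dx_eq h).trans ?_
    simp [Dx, smul_smul]
    ring
  have eDxDx : Dx (fun p : ℝ × ℝ => Real.exp (2 * a2 * p.2) * ((1/2) * Dx (Dx (Dx α)) p)) (x, t)
      = Real.exp (2 * a2 * t) * ((1/2) * Dx (Dx (Dx (Dx α))) (x, t)) := by
    have h := (hexp a2 (x, t)).mul ((hasF hC (x, t)).const_mul (1/2))
    refine (Dx_eq h).trans ?_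
    simp [Dx, smul_smul]
    ring
  have eDt : Dt (fun p : ℝ × ℝ => Real.exp (2 * a2 * p.2) * ((1/2) * Dx (Dx α) p)) (x, t)
      = Real.exp (2 * a2 * t) * ((1/2) * Dt (Dx (Dx α)) (x, t))
        + ((1/2) * Dx (Dx α) (x, t)) * (Real.exp (2 * a2 * t) * (2 * a2)) := by
    have h := (hexp a2 (x, t)).mul ((hasF hB (x, t)).const_mul (1/2))
    refine (Dt_eq h).trans ?_
    simp [Dt, smul_smul]
    ring
  rw [eDt, eDxFun, eDxDx, hDtB]
  simp only
  ring
end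
end
end

section
/- Let α : ℝ² → ℝ be a smooth solution of the Fokker–Planck equation. Then the function f₄(x,t) = α_x(x,t)·e^{a₂t} is also a solution of the Fokker–Planck equation. -/
noncomputable section

lemma aux_fst (u : ℝ × ℝ → ℝ) (hu : Differentiable ℝ u) (x t : ℝ) :
    HasDerivAt (fun y => u (y, t)) (fderiv ℝ u (x, t) (1, 0)) x := by
  have h2 : HasDerivAt (fun y : ℝ => (y, t)) ((1 : ℝ), (0 : ℝ)) x := by
    simpa using (hasDerivAt_id x).prodMk (hasDerivAt_const x t)
  exact (hu (x, t)).hasFDerivAt.comp_hasDerivAt x h2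

lemma aux_snd (u : ℝ × ℝ → ℝ) (hu : Differentiable ℝ u) (x t : ℝ) :
    HasDerivAt (fun s => u (x, s)) (fderiv ℝ u (x, t) (0, 1)) t := by
  have h2 : HasDerivAt (fun s : ℝ => (x, s)) ((0 : ℝ), (1 : ℝ)) t := by
    simpa using (hasDerivAt_const t x).prodMk (hasDerivAt_id t)
  exact (hu (x, t)).hasFDerivAt.comp_hasDerivAt t h2

lemma aux_eval_smooth (u : ℝ × ℝ → ℝ) (hu : ContDiff ℝ (⊤ : ℕ∞) u) (c : ℝ × ℝ) :
    ContDiff ℝ (⊤ : ℕ∞) (fun p => fderiv ℝ u p c) :=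
  (ContinuousLinearMap.apply ℝ ℝ c).contDiff.comp (hu.fderiv_right (by simp))

lemma aux_eval_fderiv (u : ℝ × ℝ → ℝ) (hu : ContDiff ℝ (⊤ : ℕ∞) u) (c p w : ℝ × ℝ) :
    fderiv ℝ (fun q => fderiv ℝ u q c) p w = fderiv ℝ (fderiv ℝ u) p w c := by
  have hd : DifferentiableAt ℝ (fderiv ℝ u) p :=
    ((hu.fderiv_right (m := (⊤ : ℕ∞)) ((by simp))).differentiable (by simp)) p
  have h := ((ContinuousLinearMap.apply ℝ ℝ c).hasFDerivAt (x := fderiv ℝ u p)).comp p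
    hd.hasFDerivAt
  have h2 : HasFDerivAt (fun q => fderiv ℝ u q c)
      (((ContinuousLinearMap.apply ℝ ℝ) c).comp (fderiv ℝ (fderiv ℝ u) p)) p := h
  rw [h2.fderiv]; rfl

theorem stmt_3 (a1 a2 : ℝ) (ha2 : a2 ≠ 0) (α : ℝ × ℝ → ℝ)
    (hsmooth : ContDiff ℝ (⊤ : ℕ∞) α) (hα : IsFPESol a1 a2 α) :
    IsFPESol a1 a2 (fun p : ℝ × ℝ =>
      deriv (fun y => α (y, p.2)) p.1 * Real.exp (a2 * p.2)) := by
  have hd : Differentiable ℝ α := hsmooth.differentiable (by simp)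
  set v : ℝ × ℝ → ℝ := fun p => fderiv ℝ α p (1, 0) with hv_def
  set T : ℝ × ℝ → ℝ := fun p => fderiv ℝ α p (0, 1) with hT_def
  have hv : ContDiff ℝ (⊤ : ℕ∞) v := aux_eval_smooth α hsmooth _
  have hT : ContDiff ℝ (⊤ : ℕ∞) T := aux_eval_smooth α hsmooth _
  have hvd : Differentiable ℝ v := hv.differentiable (by simp)
  have hTd : Differentiable ℝ T := hT.differentiable (by simp)
  set w : ℝ × ℝ → ℝ := fun p => fderiv ℝ v p (1, 0) with hw_def
  have hw : ContDiff ℝ (⊤ : ℕ∞) w := aux_eval_smooth v hv _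
  have hwd : Differentiable ℝ w := hw.differentiable (by simp)
  -- the function in question is `v p * exp (a2 * p.2)`
  have key : (fun p : ℝ × ℝ => deriv (fun y => α (y, p.2)) p.1 * Real.exp (a2 * p.2))
      = fun p => v p * Real.exp (a2 * p.2) := by
    funext p
    rw [(aux_fst α hd p.1 p.2).deriv]
  rw [key]
  -- the PDE in terms of v, T, w
  have hPDE : ∀ y s : ℝ, T (y, s) =
      -a2 * α (y, s) - (a2 * y + a1) * v (y, s) + 1 / 2 * w (y, s) := by
    intro y s
    have h := hα y s
    rw [(aux_snd α hd y s).deriv, (aux_fst α hd y s).deriv] at h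
    have h2 : (deriv fun z => α (z, s)) = fun z => v (z, s) :=
      funext fun z => (aux_fst α hd z s).deriv
    rw [h2, (aux_fst v hvd y s).deriv] at h
    exact h
  intro x t
  set E := Real.exp (a2 * t) with hE
  -- compute the derivatives in the goal
  have hexp : HasDerivAt (fun s : ℝ => Real.exp (a2 * s)) (E * a2) t := by
    have h1 : HasDerivAt (fun s : ℝ => a2 * s) a2 t := by
      simpa using (hasDerivAt_id t).const_mul a2
    exact (Real.hasDerivAt_exp (a2 * t)).comp t h1
  have h1 : HasDerivAt (fun s => v (x, s) * Real.exp (a2 * s))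
      (fderiv ℝ v (x, t) (0, 1) * E + v (x, t) * (E * a2)) t :=
    (aux_snd v hvd x t).mul hexp
  have h2 : HasDerivAt (fun y => v (y, t) * E) (w (x, t) * E) x :=
    (aux_fst v hvd x t).mul_const E
  have h3 : (deriv fun y => v (y, t) * E) = fun y => w (y, t) * E :=
    funext fun y => ((aux_fst v hvd y t).mul_const E).deriv
  have h4 : HasDerivAt (fun y => w (y, t) * E) (fderiv ℝ w (x, t) (1, 0) * E) x :=
    (aux_fst w hwd x t).mul_const E
  -- differentiate the PDE in x
  have hlin : HasDerivAt (fun y : ℝ => a2 * y + a1) a2 x := by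
    simpa using ((hasDerivAt_id x).const_mul a2).add_const a1
  have hR : HasDerivAt (fun y => -a2 * α (y, t) - (a2 * y + a1) * v (y, t) + 1 / 2 * w (y, t))
      (-a2 * v (x, t) - (a2 * v (x, t) + (a2 * x + a1) * w (x, t))
        + 1 / 2 * fderiv ℝ w (x, t) (1, 0)) x :=
    (((aux_fst α hd x t).const_mul (-a2)).sub
      (hlin.mul (aux_fst v hvd x t))).add ((aux_fst w hwd x t).const_mul (1 / 2))
  have hL : HasDerivAt (fun y => T (y, t)) (fderiv ℝ T (x, t) (1, 0)) x := aux_fst T hTd x t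
  have hfun : (fun y => T (y, t))
      = fun y => -a2 * α (y, t) - (a2 * y + a1) * v (y, t) + 1 / 2 * w (y, t) :=
    funext fun y => hPDE y t
  rw [hfun] at hL
  have hkey : fderiv ℝ T (x, t) (1, 0) =
      -a2 * v (x, t) - (a2 * v (x, t) + (a2 * x + a1) * w (x, t))
        + 1 / 2 * fderiv ℝ w (x, t) (1, 0) := hL.unique hR
  -- Clairaut
  have hsymm : IsSymmSndFDerivAt ℝ α (x, t) :=
    hsmooth.contDiffAt.isSymmSndFDerivAt (by rw [minSmoothness_of_isRCLikeNormedField]; exact WithTop.coe_le_coe.mpr (le_top : (2 : ℕ∞) ≤ ⊤))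
  have hswap : fderiv ℝ T (x, t) (1, 0) = fderiv ℝ v (x, t) (0, 1) := by
    rw [hv_def, hT_def, aux_eval_fderiv α hsmooth _ _ _, aux_eval_fderiv α hsmooth _ _ _]
    exact hsymm _ _
  -- put everything together
  rw [h1.deriv, h2.deriv, h3, h4.deriv, ← hswap, hkey]
  ring
end
end

section
/- The function g₄(x,t) = [3a₂² − 12a₂(a₂x+a₁)² + 4(a₂x+a₁)⁴]·e^{-5a₂t} is a solution of the Fokker–Planck equation. -/
/-! Separating variables, `f(x) e^{μ t}` solves the equation once `f` solves the ODE
`μ f = -a₂ f - (a₂ x + a₁) f' + f''/2`; in the variable `z = a₂ x + a₁` this becomes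
`μ P = -a₂ P - a₂ z P' + (a₂² / 2) P''`, which for `P(z) = 3a₂² - 12a₂ z² + 4z⁴` and
`μ = -5a₂` is a polynomial identity. -/

noncomputable section

open Real

theorem isFPESol_mul_exp {a1 a2 μ : ℝ} {f f' f'' : ℝ → ℝ}
    (hf : ∀ x, HasDerivAt f (f' x) x) (hf' : ∀ x, HasDerivAt f' (f'' x) x)
    (hode : ∀ x, μ * f x = -a2 * f x - (a2 * x + a1) * f' x + 1 / 2 * f'' x) :
    IsFPESol a1 a2 (fun p => f p.1 * exp (μ * p.2)) := by
  intro x t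
  have hexp : HasDerivAt (fun s => exp (μ * s)) (exp (μ * t) * μ) t := by
    simpa using ((hasDerivAt_id t).const_mul μ).exp
  have hderiv_x : deriv (fun y => f y * exp (μ * t)) = fun y => f' y * exp (μ * t) :=
    funext fun y => ((hf y).mul_const _).deriv
  simp only
  rw [(hexp.const_mul (f x)).deriv, ((hf x).mul_const _).deriv, hderiv_x,
    ((hf' x).mul_const _).deriv]
  linear_combination exp (μ * t) * hode x

theorem isFPESol_comp_affine_mul_exp {a1 a2 μ : ℝ} {P P' P'' : ℝ → ℝ}
    (hP : ∀ z, HasDerivAt P (P' z) z) (hP' : ∀ z, HasDerivAt P' (P'' z) z)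
    (hode : ∀ z, μ * P z = -a2 * P z - a2 * z * P' z + a2 ^ 2 / 2 * P'' z) :
    IsFPESol a1 a2 (fun p => P (a2 * p.1 + a1) * exp (μ * p.2)) := by
  have haffine : ∀ x, HasDerivAt (fun x => a2 * x + a1) a2 x := fun x => by
    simpa using ((hasDerivAt_id x).const_mul a2).add_const a1
  refine isFPESol_mul_exp (f := fun x => P (a2 * x + a1)) (f' := fun x => a2 * P' (a2 * x + a1))
    (f'' := fun x => a2 * (a2 * P'' (a2 * x + a1)))
    (fun x => ?_) (fun x => ?_) (fun x => ?_)
  · simpa [mul_comm, Function.comp_def] using (hP _).comp x (haffine x)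
  · simpa [mul_comm, Function.comp_def] using ((hP' _).comp x (haffine x)).const_mul a2
  · linear_combination hode (a2 * x + a1)

theorem stmt_8_general (a1 a2 : ℝ) :
    IsFPESol a1 a2 (fun p : ℝ × ℝ =>
      (3 * a2 ^ 2 - 12 * a2 * (a2 * p.1 + a1) ^ 2 + 4 * (a2 * p.1 + a1) ^ 4) *
        Real.exp (-5 * a2 * p.2)) := by
  refine isFPESol_comp_affine_mul_exp (P := fun z => 3 * a2 ^ 2 - 12 * a2 * z ^ 2 + 4 * z ^ 4)
    (P' := fun z => -24 * a2 * z + 16 * z ^ 3) (P'' := fun z => -24 * a2 + 48 * z ^ 2)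
    (fun z => ?_) (fun z => ?_) (fun z => ?_)
  · exact ((((hasDerivAt_pow 2 z).const_mul (12 * a2)).const_sub (3 * a2 ^ 2)).add
      ((hasDerivAt_pow 4 z).const_mul 4)).congr_deriv (by norm_num; ring)
  · exact (((hasDerivAt_id z).const_mul (-24 * a2)).add
      ((hasDerivAt_pow 3 z).const_mul 16)).congr_deriv (by norm_num; ring)
  · ring

theorem stmt_8 (a1 a2 : ℝ) (ha2 : a2 ≠ 0) :
    IsFPESol a1 a2 (fun p : ℝ × ℝ =>
      (3 * a2 ^ 2 - 12 * a2 * (a2 * p.1 + a1) ^ 2 + 4 * (a2 * p.1 + a1) ^ 4) *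
        Real.exp (-5 * a2 * p.2)) :=
  stmt_8_general a1 a2
end
end

section
/- Let f : ℝ → ℝ be a smooth function and define, for (x,t) with a₂x+a₁ ≠ 0, v(x,t) = f((a₂x+a₁)e^{a₂t})·(a₂x+a₁)^{-2}·exp((a₂x+a₁)²/a₂). Then v satisfies the invariant surface condition −(a₂x+a₁)·v_x(x,t) + v_t(x,t) + 2[(a₂x+a₁)² − a₂]·v(x,t) = 0 at every point (x,t) with a₂x+a₁ ≠ 0. -/
noncomputable section

theorem stmt_12 (a1 a2 : ℝ) (ha2 : a2 ≠ 0) (f : ℝ → ℝ) (hf : ContDiff ℝ (⊤ : ℕ∞) f) :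
    ∀ v : ℝ × ℝ → ℝ,
      v = (fun p : ℝ × ℝ =>
          f ((a2 * p.1 + a1) * Real.exp (a2 * p.2)) * ((a2 * p.1 + a1) ^ 2)⁻¹ *
            Real.exp ((a2 * p.1 + a1) ^ 2 / a2)) →
        ∀ x t : ℝ, a2 * x + a1 ≠ 0 →
          -(a2 * x + a1) * deriv (fun y => v (y, t)) x
              + deriv (fun s => v (x, s)) t
              + 2 * ((a2 * x + a1) ^ 2 - a2) * v (x, t) = 0 := by
  intro v hv x t hL
  subst hv
  simp only
  set L : ℝ := a2 * x + a1 with hLdef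
  set c : ℝ := Real.exp (a2 * t) with hcdef
  have hc : c ≠ 0 := Real.exp_ne_zero _
  have hdf : Differentiable ℝ f := hf.differentiable (by simp)
  set D : ℝ := deriv f (L * c) with hDdef
  set F : ℝ := f (L * c) with hFdef
  set E : ℝ := Real.exp (L ^ 2 / a2) with hEdef
  -- derivative in x
  have hinner : HasDerivAt (fun y : ℝ => a2 * y + a1) a2 x := by
    simpa using ((hasDerivAt_id x).const_mul a2).add_const a1
  have h1 : HasDerivAt (fun y : ℝ => f ((a2 * y + a1) * c)) (D * (a2 * c)) x := by
    have hinner2 : HasDerivAt (fun y : ℝ => (a2 * y + a1) * c) (a2 * c) x :=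
      hinner.mul_const c
    exact ((hdf (L * c)).hasDerivAt).comp x hinner2
  have hsq : HasDerivAt (fun y : ℝ => (a2 * y + a1) ^ 2) (2 * L * a2) x := by
    have := (hinner.pow 2)
    simpa [hLdef, Pi.pow_def] using this.congr_deriv (by ring)
  have h2 : HasDerivAt (fun y : ℝ => ((a2 * y + a1) ^ 2)⁻¹)
      (-(2 * L * a2) / (L ^ 2) ^ 2) x := by
    exact hsq.inv (pow_ne_zero 2 hL)
  have h3 : HasDerivAt (fun y : ℝ => Real.exp ((a2 * y + a1) ^ 2 / a2))
      (E * (2 * L * a2 / a2)) x := by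
    have hdiv : HasDerivAt (fun y : ℝ => (a2 * y + a1) ^ 2 / a2) (2 * L * a2 / a2) x :=
      hsq.div_const a2
    simpa [hEdef, mul_comm] using hdiv.exp
  have hx : HasDerivAt (fun y : ℝ =>
      f ((a2 * y + a1) * c) * ((a2 * y + a1) ^ 2)⁻¹ *
        Real.exp ((a2 * y + a1) ^ 2 / a2))
      ((D * (a2 * c) * (L ^ 2)⁻¹ + F * (-(2 * L * a2) / (L ^ 2) ^ 2)) * E
        + F * (L ^ 2)⁻¹ * (E * (2 * L * a2 / a2))) x := by
    exact (h1.mul h2).mul h3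
  -- derivative in t
  have hinnert : HasDerivAt (fun s : ℝ => L * Real.exp (a2 * s)) (L * (a2 * c)) t := by
    have : HasDerivAt (fun s : ℝ => Real.exp (a2 * s)) (c * a2) t := by
      have h := ((hasDerivAt_id t).const_mul a2).exp
      simpa [hcdef, mul_comm] using h
    have := this.const_mul L
    simpa [mul_comm, mul_assoc, mul_left_comm] using this
  have ht : HasDerivAt (fun s : ℝ =>
      f ((a2 * x + a1) * Real.exp (a2 * s)) * ((a2 * x + a1) ^ 2)⁻¹ *
        Real.exp ((a2 * x + a1) ^ 2 / a2))
      (D * (L * (a2 * c)) * (L ^ 2)⁻¹ * E) t := by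
    have hft : HasDerivAt (fun s : ℝ => f (L * Real.exp (a2 * s))) (D * (L * (a2 * c))) t :=
      ((hdf (L * c)).hasDerivAt).comp t hinnert
    have := (hft.mul_const ((L ^ 2)⁻¹)).mul_const E
    simpa [hLdef, hEdef] using this
  rw [hx.deriv, ht.deriv]
  have hL2 : L ^ 2 ≠ 0 := pow_ne_zero 2 hL
  field_simp
  ring
end
end

section
/- Let f, g : ℝ → ℝ be smooth functions and define, for (x,t) with a₂x+a₁ ≠ 0, v(x,t) = f((a₂x+a₁)e^{a₂t})·(a₂x+a₁)^{-2}·exp((a₂x+a₁)²/a₂) and u(x,t) = [4a₂x·f((a₂x+a₁)e^{a₂t}) + g((a₂x+a₁)e^{a₂t})]·(a₂x+a₁)^{-2}·exp((a₂x+a₁)²/a₂). Then u and v satisfy the invariant surface condition −(a₂x+a₁)·u_x(x,t) + u_t(x,t) + 2[(a₂x+a₁)² − a₂]·u(x,t) + 4a₂(a₂x+a₁)·v(x,t) = 0 at every point (x,t) with a₂x+a₁ ≠ 0. -/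
noncomputable section

theorem stmt_13 (a1 a2 : ℝ) (ha2 : a2 ≠ 0) (f g : ℝ → ℝ)
    (hf : ContDiff ℝ (⊤ : ℕ∞) f) (hg : ContDiff ℝ (⊤ : ℕ∞) g) :
    ∀ u v : ℝ × ℝ → ℝ,
      v = (fun p : ℝ × ℝ =>
          f ((a2 * p.1 + a1) * Real.exp (a2 * p.2)) * ((a2 * p.1 + a1) ^ 2)⁻¹ *
            Real.exp ((a2 * p.1 + a1) ^ 2 / a2)) →
      u = (fun p : ℝ × ℝ =>
          (4 * a2 * p.1 * f ((a2 * p.1 + a1) * Real.exp (a2 * p.2))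
              + g ((a2 * p.1 + a1) * Real.exp (a2 * p.2))) * ((a2 * p.1 + a1) ^ 2)⁻¹ *
            Real.exp ((a2 * p.1 + a1) ^ 2 / a2)) →
        ∀ x t : ℝ, a2 * x + a1 ≠ 0 →
          -(a2 * x + a1) * deriv (fun y => u (y, t)) x
              + deriv (fun s => u (x, s)) t
              + 2 * ((a2 * x + a1) ^ 2 - a2) * u (x, t)
              + 4 * a2 * (a2 * x + a1) * v (x, t) = 0 := by
  intro u v hv hu x t hA
  subst hv hu
  have hf' : Differentiable ℝ f := hf.differentiable (by simp)
  have hg' : Differentiable ℝ g := hg.differentiable (by simp)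
  set A : ℝ := a2 * x + a1 with hAdef
  set Et : ℝ := Real.exp (a2 * t) with hEt
  set z : ℝ := A * Et with hz
  -- spatial derivative
  have h_aff : HasDerivAt (fun y : ℝ => a2 * y + a1) a2 x := by
    simpa using ((hasDerivAt_id x).const_mul a2).add_const a1
  have h_arg : HasDerivAt (fun y : ℝ => (a2 * y + a1) * Et) (a2 * Et) x :=
    h_aff.mul_const Et
  have h_fx : HasDerivAt (fun y : ℝ => f ((a2 * y + a1) * Et)) (deriv f z * (a2 * Et)) x := by
    simpa [Function.comp_def] using (hf' z).hasDerivAt.comp x h_arg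
  have h_gx : HasDerivAt (fun y : ℝ => g ((a2 * y + a1) * Et)) (deriv g z * (a2 * Et)) x := by
    simpa [Function.comp_def] using (hg' z).hasDerivAt.comp x h_arg
  have h_lin : HasDerivAt (fun y : ℝ => 4 * a2 * y) (4 * a2) x := by
    simpa using (hasDerivAt_id x).const_mul (4 * a2)
  have h_num : HasDerivAt
      (fun y : ℝ => 4 * a2 * y * f ((a2 * y + a1) * Et) + g ((a2 * y + a1) * Et))
      ((4 * a2) * f z + 4 * a2 * x * (deriv f z * (a2 * Et)) + deriv g z * (a2 * Et)) x :=
    (h_lin.mul h_fx).add h_gx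
  have h_sq : HasDerivAt (fun y : ℝ => (a2 * y + a1) ^ 2) (2 * A * a2) x := by
    have := h_aff.fun_pow 2
    simpa [hAdef] using this
  have h_inv : HasDerivAt (fun y : ℝ => ((a2 * y + a1) ^ 2)⁻¹)
      (-(2 * A * a2) / (A ^ 2) ^ 2) x := h_sq.inv (pow_ne_zero 2 hA)
  have h_exp : HasDerivAt (fun y : ℝ => Real.exp ((a2 * y + a1) ^ 2 / a2))
      (Real.exp (A ^ 2 / a2) * (2 * A * a2 / a2)) x := (h_sq.div_const a2).exp
  have h_ux : HasDerivAt
      (fun y : ℝ => (4 * a2 * y * f ((a2 * y + a1) * Et) + g ((a2 * y + a1) * Et)) *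
        ((a2 * y + a1) ^ 2)⁻¹ * Real.exp ((a2 * y + a1) ^ 2 / a2))
      ((((4 * a2) * f z + 4 * a2 * x * (deriv f z * (a2 * Et)) + deriv g z * (a2 * Et)) *
          (A ^ 2)⁻¹ +
        (4 * a2 * x * f z + g z) * (-(2 * A * a2) / (A ^ 2) ^ 2)) *
          Real.exp (A ^ 2 / a2) +
        (4 * a2 * x * f z + g z) * (A ^ 2)⁻¹ *
          (Real.exp (A ^ 2 / a2) * (2 * A * a2 / a2))) x :=
    (h_num.mul h_inv).mul h_exp
  -- time derivative
  have h_et : HasDerivAt (fun s : ℝ => Real.exp (a2 * s)) (Et * a2) t := by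
    simpa [hEt, Function.comp_def] using (Real.hasDerivAt_exp (a2 * t)).comp t ((hasDerivAt_id t).const_mul a2)
  have h_argt : HasDerivAt (fun s : ℝ => A * Real.exp (a2 * s)) (A * (Et * a2)) t :=
    h_et.const_mul A
  have h_ft : HasDerivAt (fun s : ℝ => f (A * Real.exp (a2 * s)))
      (deriv f z * (A * (Et * a2))) t := by
    simpa [Function.comp_def] using (hf' z).hasDerivAt.comp t h_argt
  have h_gt : HasDerivAt (fun s : ℝ => g (A * Real.exp (a2 * s)))
      (deriv g z * (A * (Et * a2))) t := by
    simpa [Function.comp_def] using (hg' z).hasDerivAt.comp t h_argt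
  have h_ut : HasDerivAt
      (fun s : ℝ => (4 * a2 * x * f ((a2 * x + a1) * Real.exp (a2 * s)) +
          g ((a2 * x + a1) * Real.exp (a2 * s))) * ((a2 * x + a1) ^ 2)⁻¹ *
          Real.exp ((a2 * x + a1) ^ 2 / a2))
      ((4 * a2 * x * (deriv f z * (A * (Et * a2))) + deriv g z * (A * (Et * a2))) *
        (A ^ 2)⁻¹ * Real.exp (A ^ 2 / a2)) t := by
    exact (((h_ft.const_mul (4 * a2 * x)).add h_gt).mul_const _).mul_const _
  simp only
  rw [h_ux.deriv, h_ut.deriv]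
  simp only [← hAdef, ← hEt, ← hz]
  have hE : Real.exp (A ^ 2 / a2) ≠ 0 := Real.exp_ne_zero _
  field_simp
  ring
end
end

section
/- On ℝ³ with coordinates (x,t,u), the Lie bracket of the vector fields V₅ = −(a₂x+a₁)e^{-2a₂t}∂/∂x + e^{-2a₂t}∂/∂t − 2(a₂x+a₁)²e^{-2a₂t}u·∂/∂u and V₆ = e^{2a₂t}∂/∂t + (a₂x+a₁)e^{2a₂t}∂/∂x − a₂u·e^{2a₂t}∂/∂u equals 4a₂·V₄ − 2a₂²·V₂, where V₄ = ∂/∂t and V₂ = u·∂/∂u; that is, [V₅,V₆] = 4a₂V₄ − 2a₂²V₂. -/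
/-!
`V₅` and `V₆` both have the shape `e^{ct} (f(x) ∂ₓ + ∂ₜ + g(x) u ∂ᵤ)`, with `c = ∓2a₂`. The
bracket of two fields of this shape is `e^{(c+d)t}` times a field with explicit
coefficients; here the exponents cancel and those coefficients reduce to `(0, 4a₂, -2a₂² u)`.
-/

noncomputable section

/-- Lie bracket of vector fields on `ℝ³` (coordinates `(x, t, u)`):
`[V, W](p) = DW(p)(V(p)) − DV(p)(W(p))`. -/
def lieBracket (V W : ℝ × ℝ × ℝ → ℝ × ℝ × ℝ) (p : ℝ × ℝ × ℝ) : ℝ × ℝ × ℝ :=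
  fderiv ℝ W p (V p) - fderiv ℝ V p (W p)

def expTimeField (c : ℝ) (f g : ℝ → ℝ) (p : ℝ × ℝ × ℝ) : ℝ × ℝ × ℝ :=
  Real.exp (c * p.2.1) • (f p.1, 1, g p.1 * p.2.2)

section
variable {c d : ℝ} {f g h k : ℝ → ℝ} {f' g' h' k' : ℝ} {p : ℝ × ℝ × ℝ}

theorem fderiv_expTimeField_apply (hf : HasDerivAt f f' p.1) (hg : HasDerivAt g g' p.1)
    (v : ℝ × ℝ × ℝ) :
    fderiv ℝ (expTimeField c f g) p v = Real.exp (c * p.2.1) •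
      (f' * v.1 + c * f p.1 * v.2.1, c * v.2.1,
        (g' * v.1 + c * g p.1 * v.2.1) * p.2.2 + g p.1 * v.2.2) := by
  have hx : HasFDerivAt (fun q : ℝ × ℝ × ℝ => q.1) (ContinuousLinearMap.fst ℝ ℝ (ℝ × ℝ)) p :=
    hasFDerivAt_fst
  have hsnd : HasFDerivAt (fun q : ℝ × ℝ × ℝ => q.2) (ContinuousLinearMap.snd ℝ ℝ (ℝ × ℝ)) p :=
    hasFDerivAt_snd
  have hV : HasFDerivAt (expTimeField c f g) _ p :=
    (hsnd.fst.const_mul c).exp.smul <| (hf.comp_hasFDerivAt p hx).prodMk <|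
      (hasFDerivAt_const (1 : ℝ) p).prodMk ((hg.comp_hasFDerivAt p hx).mul hsnd.snd)
  rw [hV.fderiv]
  simp only [Function.comp_apply, add_apply, smul_apply,
    ContinuousLinearMap.prod_apply, ContinuousLinearMap.coe_fst', smul_eq_mul,
    zero_apply, ContinuousLinearMap.comp_apply, ContinuousLinearMap.coe_snd',
    Prod.smul_mk, mul_zero, ContinuousLinearMap.smulRight_apply, mul_one, Prod.mk_add_mk,
    zero_add, Prod.mk.injEq, true_and]
  constructor <;> ring

theorem lieBracket_expTimeField (hf : HasDerivAt f f' p.1) (hg : HasDerivAt g g' p.1)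
    (hh : HasDerivAt h h' p.1) (hk : HasDerivAt k k' p.1) :
    lieBracket (expTimeField c f g) (expTimeField d h k) p = Real.exp ((c + d) * p.2.1) •
      (h' * f p.1 - f' * h p.1 + d * h p.1 - c * f p.1, d - c,
        (k' * f p.1 - g' * h p.1 + d * k p.1 - c * g p.1) * p.2.2) := by
  rw [add_mul, Real.exp_add, lieBracket, fderiv_expTimeField_apply hh hk,
    fderiv_expTimeField_apply hf hg]
  simp only [expTimeField, Prod.smul_mk, smul_eq_mul, Prod.mk_sub_mk, Prod.mk.injEq]
  refine ⟨by ring, by ring, by ring⟩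

end

theorem stmt_17_general (a1 a2 : ℝ) :
    ∀ p : ℝ × ℝ × ℝ,
      lieBracket
        (fun p => (-(a2 * p.1 + a1) * Real.exp (-2 * a2 * p.2.1),
          Real.exp (-2 * a2 * p.2.1),
          -2 * (a2 * p.1 + a1) ^ 2 * Real.exp (-2 * a2 * p.2.1) * p.2.2))
        (fun p => ((a2 * p.1 + a1) * Real.exp (2 * a2 * p.2.1),
          Real.exp (2 * a2 * p.2.1),
          -(a2 * p.2.2) * Real.exp (2 * a2 * p.2.1))) p
        = (4 * a2) • ((0 : ℝ), (1 : ℝ), (0 : ℝ))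
            - (2 * a2 ^ 2) • ((0 : ℝ), (0 : ℝ), p.2.2) := by
  intro p
  have hs : HasDerivAt (fun x => a2 * x + a1) a2 p.1 := by
    simpa using ((hasDerivAt_id p.1).const_mul a2).add_const a1
  have hV₅ : (fun p : ℝ × ℝ × ℝ => (-(a2 * p.1 + a1) * Real.exp (-2 * a2 * p.2.1),
      Real.exp (-2 * a2 * p.2.1), -2 * (a2 * p.1 + a1) ^ 2 * Real.exp (-2 * a2 * p.2.1) * p.2.2))
      = expTimeField (-2 * a2) (fun x => -(a2 * x + a1)) (fun x => -2 * (a2 * x + a1) ^ 2) := by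
    ext q <;> simp only [expTimeField, Prod.smul_fst, Prod.smul_snd, smul_eq_mul] <;> ring
  have hV₆ : (fun p : ℝ × ℝ × ℝ => ((a2 * p.1 + a1) * Real.exp (2 * a2 * p.2.1),
      Real.exp (2 * a2 * p.2.1), -(a2 * p.2.2) * Real.exp (2 * a2 * p.2.1)))
      = expTimeField (2 * a2) (fun x => a2 * x + a1) (fun _ => -a2) := by
    ext q <;> simp only [expTimeField, Prod.smul_fst, Prod.smul_snd, smul_eq_mul] <;> ring
  have hsq : HasDerivAt (fun x => -2 * (a2 * x + a1) ^ 2) (-4 * a2 * (a2 * p.1 + a1)) p.1 :=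
    ((hs.pow 2).const_mul (-2)).congr_deriv (by push_cast; ring)
  have hneg : HasDerivAt (fun x => -(a2 * x + a1)) (-a2) p.1 := hs.neg
  rw [hV₅, hV₆, lieBracket_expTimeField hneg hsq hs (hasDerivAt_const _ _),
    show -2 * a2 + 2 * a2 = 0 by ring, zero_mul, Real.exp_zero, one_smul]
  simp only [Prod.smul_mk, smul_eq_mul, Prod.mk_sub_mk, Prod.mk.injEq]
  refine ⟨by ring, by ring, by ring⟩

theorem stmt_17 (a1 a2 : ℝ) (ha2 : a2 ≠ 0) :
    ∀ p : ℝ × ℝ × ℝ,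
      lieBracket
        (fun p => (-(a2 * p.1 + a1) * Real.exp (-2 * a2 * p.2.1),
          Real.exp (-2 * a2 * p.2.1),
          -2 * (a2 * p.1 + a1) ^ 2 * Real.exp (-2 * a2 * p.2.1) * p.2.2))
        (fun p => ((a2 * p.1 + a1) * Real.exp (2 * a2 * p.2.1),
          Real.exp (2 * a2 * p.2.1),
          -(a2 * p.2.2) * Real.exp (2 * a2 * p.2.1))) p
        = (4 * a2) • ((0 : ℝ), (1 : ℝ), (0 : ℝ))
            - (2 * a2 ^ 2) • ((0 : ℝ), (0 : ℝ), p.2.2) :=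
  stmt_17_general a1 a2
end
end
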